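/- For any measurable m : Ω → [0,1] with ‖m‖₁ > 0, sup over segmentations s of D_m(s) equals sup over v ∈ [0,1] of d_m(v) := 2∫₀^v (1 - F_m⁻¹(u)) du / (‖m‖₁ + v), where D_m(s) = 2∫ s·m dλ / (∫ s dλ + ‖m‖₁). -/

import Mathlib

/-!
Write `m*(u) = 1 - F_m⁻¹(u)` for the decreasing rearrangement of `m`. By the layer-cake formula,
`∫₀^v m* = ∫₀^∞ min(v, λ(m > t)) dt`, while `∫_A m = ∫₀^∞ λ({m > t} ∩ A) dt` is at most the same
expression with `v = λ(A)`, with equality when `A` is a level set of `m`. Hence the Dice score of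
`1_A` is at most `d_m(λ(A))`. Conversely, for `v ∈ (0,1]` and `t₀ = F_m⁻¹(v)`, `v` lies between the
measures `v₁ ≤ v₂` of the level sets `{1 - m < t₀}` and `{1 - m ≤ t₀}`, at which `d_m` equals their
Dice scores; since `m* = 1 - t₀` on `(v₁, v₂]`, `d_m` is linear-fractional on `[v₁, v₂]` and so is
bounded by its value at one of the endpoints.
-/

open MeasureTheory Set

noncomputable section

/-- Normalized Lebesgue measure on the unit cube `[0,1]^n`. -/
def cubeMeasure (n : ℕ) : Measure (Fin n → ℝ) :=
  volume.restrict (Set.univ.pi fun _ => Set.Icc (0:ℝ) 1)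

/-- A segmentation: a measurable `{0,1}`-valued function on the cube. -/
def IsSeg {n : ℕ} (s : (Fin n → ℝ) → ℝ) : Prop :=
  Measurable s ∧ ∀ ω, s ω = 0 ∨ s ω = 1

/-- A marginal function: a measurable `[0,1]`-valued function on the cube. -/
def IsMarg {n : ℕ} (m : (Fin n → ℝ) → ℝ) : Prop :=
  Measurable m ∧ ∀ ω, m ω ∈ Set.Icc (0:ℝ) 1

/-- The volume `‖f‖₁ = ∫ f dλ` (for nonnegative `f`). -/
def vol {n : ℕ} (f : (Fin n → ℝ) → ℝ) : ℝ := ∫ ω, f ω ∂(cubeMeasure n)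

/-- `F_m(t) = λ({ω : 1 - m(ω) ≤ t})`. -/
def Fcdf {n : ℕ} (m : (Fin n → ℝ) → ℝ) (t : ℝ) : ℝ :=
  ((cubeMeasure n) {ω | 1 - m ω ≤ t}).toReal

/-- The left limit `F_m(t-) = λ({ω : 1 - m(ω) < t})`. -/
def FcdfMinus {n : ℕ} (m : (Fin n → ℝ) → ℝ) (t : ℝ) : ℝ :=
  ((cubeMeasure n) {ω | 1 - m ω < t}).toReal

/-- The generalized inverse (quantile function) `F_m⁻¹(v) = inf{t ∈ [0,1] : F_m(t) ≥ v}`. -/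
def Finv {n : ℕ} (m : (Fin n → ℝ) → ℝ) (v : ℝ) : ℝ :=
  sInf {t | t ∈ Set.Icc (0:ℝ) 1 ∧ v ≤ Fcdf m t}

/-- Dice. -/
def Dice {n : ℕ} (m s : (Fin n → ℝ) → ℝ) : ℝ :=
  2 * (∫ ω, s ω * m ω ∂(cubeMeasure n)) / (vol s + vol m)

/-- The function `d_m`. -/
def dFun {n : ℕ} (m : (Fin n → ℝ) → ℝ) (v : ℝ) : ℝ :=
  2 * (∫ u in (0:ℝ)..v, (1 - Finv m u)) / (vol m + v)


open ProbabilityTheory Filter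

instance (n : ℕ) : IsProbabilityMeasure (cubeMeasure n) := by
  constructor
  rw [cubeMeasure, Measure.restrict_apply MeasurableSet.univ, univ_inter, volume_pi_pi]
  simp [Real.volume_Icc]

section Quantile

variable {n : ℕ} {m : (Fin n → ℝ) → ℝ}

lemma Fcdf_mono : Monotone (Fcdf m) := fun _ _ hst =>
  measureReal_mono fun _ hω => le_trans hω hst

lemma Fcdf_le_one (t : ℝ) : Fcdf m t ≤ 1 := measureReal_le_one

lemma Fcdf_of_neg (hm : IsMarg m) {t : ℝ} (ht : t < 0) : Fcdf m t = 0 := by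
  have : {ω | 1 - m ω ≤ t} = ∅ :=
    eq_empty_of_forall_notMem fun ω hω => by linarith [(hm.2 ω).2, show 1 - m ω ≤ t from hω]
  rw [Fcdf, this]
  simp

lemma Fcdf_one (hm : IsMarg m) : Fcdf m 1 = 1 := by
  have : {ω | 1 - m ω ≤ 1} = univ :=
    eq_univ_of_forall fun ω => show 1 - m ω ≤ 1 by linarith [(hm.2 ω).1]
  rw [Fcdf, this]
  simp

lemma Fcdf_eq_cdf (hm : IsMarg m) :
    Fcdf m = cdf ((cubeMeasure n).map fun ω => 1 - m ω) := by
  have hX : Measurable fun ω => 1 - m ω := measurable_const.sub hm.1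
  have := Measure.isProbabilityMeasure_map (μ := cubeMeasure n) hX.aemeasurable
  funext t
  rw [cdf_eq_real, measureReal_def, Measure.map_apply hX measurableSet_Iic]
  rfl

lemma FcdfMinus_eq_leftLim (hm : IsMarg m) : FcdfMinus m = Function.leftLim (Fcdf m) := by
  have hX : Measurable fun ω => 1 - m ω := measurable_const.sub hm.1
  have := Measure.isProbabilityMeasure_map (μ := cubeMeasure n) hX.aemeasurable
  funext t
  have hIio := (cdf _).measure_Iio (tendsto_cdf_atBot ((cubeMeasure n).map fun ω => 1 - m ω)) t
  rw [measure_cdf, sub_zero, Measure.map_apply hX measurableSet_Iio] at hIio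
  have hpos : 0 ≤ Function.leftLim (Fcdf m) t :=
    measureReal_nonneg.trans (Fcdf_mono.le_leftLim (sub_one_lt t))
  rw [← Fcdf_eq_cdf hm] at hIio
  rw [FcdfMinus]
  exact (congrArg ENNReal.toReal hIio).trans (ENNReal.toReal_ofReal hpos)

lemma Fcdf_continuousWithinAt_Ici (hm : IsMarg m) (t : ℝ) :
    ContinuousWithinAt (Fcdf m) (Ici t) t := by
  rw [Fcdf_eq_cdf hm]
  exact (cdf _).right_continuous t

lemma bddBelow_Finv_set (u : ℝ) : BddBelow {t | t ∈ Icc (0:ℝ) 1 ∧ u ≤ Fcdf m t} :=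
  ⟨0, fun _ ht => ht.1.1⟩

lemma one_mem_Finv_set (hm : IsMarg m) {u : ℝ} (hu : u ≤ 1) :
    (1:ℝ) ∈ {t | t ∈ Icc (0:ℝ) 1 ∧ u ≤ Fcdf m t} :=
  ⟨right_mem_Icc.2 zero_le_one, (Fcdf_one hm).symm ▸ hu⟩

lemma Finv_le {u t : ℝ} (ht : t ∈ Icc (0:ℝ) 1) (h : u ≤ Fcdf m t) : Finv m u ≤ t :=
  csInf_le (bddBelow_Finv_set u) ⟨ht, h⟩

lemma Finv_le_one (hm : IsMarg m) {u : ℝ} (hu : u ≤ 1) : Finv m u ≤ 1 :=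
  csInf_le (bddBelow_Finv_set u) (one_mem_Finv_set hm hu)

lemma monotoneOn_Finv (hm : IsMarg m) : MonotoneOn (Finv m) (Iic 1) := fun _ _ _ hu' huu' =>
  csInf_le_csInf (bddBelow_Finv_set _) ⟨1, one_mem_Finv_set hm hu'⟩
    fun _ ht => ⟨ht.1, huu'.trans ht.2⟩

lemma le_Fcdf_Finv (hm : IsMarg m) {u : ℝ} (hu : u ≤ 1) : u ≤ Fcdf m (Finv m u) := by
  refine ge_of_tendsto ((Fcdf_continuousWithinAt_Ici hm _).mono Ioi_subset_Ici_self)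
    (eventually_nhdsWithin_of_forall fun t (ht : Finv m u < t) => ?_)
  obtain ⟨t', ht', ht't⟩ := exists_lt_of_csInf_lt ⟨1, one_mem_Finv_set hm hu⟩ ht
  exact ht'.2.trans (Fcdf_mono ht't.le)

lemma Finv_le_iff (hm : IsMarg m) {u t : ℝ} (hu0 : 0 < u) (hu1 : u ≤ 1) :
    Finv m u ≤ t ↔ u ≤ Fcdf m t := by
  refine ⟨fun h => (le_Fcdf_Finv hm hu1).trans (Fcdf_mono h), fun h => ?_⟩
  rcases lt_or_ge t 0 with ht | ht
  · rw [Fcdf_of_neg hm ht] at h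
    exact absurd h hu0.not_ge
  rcases le_total t 1 with ht1 | ht1
  · exact Finv_le ⟨ht, ht1⟩ h
  · exact (Finv_le_one hm hu1).trans ht1

lemma Finv_lt_of_lt_FcdfMinus (hm : IsMarg m) {u t : ℝ} (hu0 : 0 < u) (hu1 : u ≤ 1)
    (h : u < FcdfMinus m t) : Finv m u < t := by
  rw [FcdfMinus_eq_leftLim hm] at h
  obtain ⟨t', hut', ht't⟩ :=
    ((Fcdf_mono.tendsto_leftLim t).eventually (lt_mem_nhds h)).and self_mem_nhdsWithin |>.exists
  exact ((Finv_le_iff hm hu0 hu1).2 hut'.le).trans_lt ht't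

lemma le_FcdfMinus_of_Finv_lt (hm : IsMarg m) {u t : ℝ} (hu1 : u ≤ 1) (h : Finv m u < t) :
    u ≤ FcdfMinus m t := by
  rw [FcdfMinus_eq_leftLim hm]
  exact (le_Fcdf_Finv hm hu1).trans (Fcdf_mono.le_leftLim h)

lemma FcdfMinus_Finv_le (hm : IsMarg m) {u : ℝ} (hu0 : 0 < u) (hu1 : u ≤ 1) :
    FcdfMinus m (Finv m u) ≤ u :=
  not_lt.1 fun h => lt_irrefl _ (Finv_lt_of_lt_FcdfMinus hm hu0 hu1 h)

end Quantile

section LayerCake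

variable {α : Type*} [MeasurableSpace α] {μ : Measure α} {f : α → ℝ} {A : Set α}

lemma setIntegral_eq_integral_measureReal_inter (hf : Integrable f μ) (hf0 : 0 ≤ f)
    (hA : MeasurableSet A) :
    ∫ x in A, f x ∂μ = ∫ t in Ioi 0, μ.real ({x | t < f x} ∩ A) := by
  rw [hf.restrict.integral_eq_integral_meas_lt (Eventually.of_forall hf0)]
  simp_rw [measureReal_restrict_apply' hA]

lemma integrableOn_min_measureReal [IsFiniteMeasure μ] (hf1 : ∀ x, f x ≤ 1) {c : ℝ}
    (hc : 0 ≤ c) : IntegrableOn (fun t => min c (μ.real {x | t < f x})) (Ioi 0) := by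
  have hanti : Antitone fun t => min c (μ.real {x | t < f x}) := fun _ _ hst =>
    min_le_min le_rfl (measureReal_mono fun _ hx => hst.trans_lt hx)
  have hIoc : IntegrableOn (fun t => min c (μ.real {x | t < f x})) (Ioc 0 1) :=
    (intervalIntegrable_iff_integrableOn_Ioc_of_le zero_le_one).1
      (hanti.antitoneOn _).intervalIntegrable
  have hIoi : IntegrableOn (fun t => min c (μ.real {x | t < f x})) (Ioi 1) := by
    refine integrableOn_zero.congr_fun (fun t (ht : 1 < t) => ?_) measurableSet_Ioi
    have : {x | t < f x} = ∅ := eq_empty_of_forall_notMem fun x hx =>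
      (hf1 x).not_gt (ht.trans hx)
    simp [this, hc]
  simpa [Ioc_union_Ioi_eq_Ioi zero_le_one] using hIoc.union hIoi

lemma setIntegral_le_integral_min [IsFiniteMeasure μ] (hf : Integrable f μ) (hf0 : 0 ≤ f)
    (hf1 : ∀ x, f x ≤ 1) (hA : MeasurableSet A) :
    ∫ x in A, f x ∂μ ≤ ∫ t in Ioi 0, min (μ.real A) (μ.real {x | t < f x}) := by
  rw [setIntegral_eq_integral_measureReal_inter hf hf0 hA]
  exact integral_mono_of_nonneg (Eventually.of_forall fun _ => measureReal_nonneg)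
    (integrableOn_min_measureReal hf1 measureReal_nonneg)
    (Eventually.of_forall fun _ =>
      le_min (measureReal_mono inter_subset_right) (measureReal_mono inter_subset_left))

lemma setIntegral_eq_integral_min_of_level [IsFiniteMeasure μ] (hf : Integrable f μ)
    (hf0 : 0 ≤ f) (hA : MeasurableSet A) {c : ℝ} (hcA : {x | c < f x} ⊆ A)
    (hAc : A ⊆ {x | c ≤ f x}) :
    ∫ x in A, f x ∂μ = ∫ t in Ioi 0, min (μ.real A) (μ.real {x | t < f x}) := by
  rw [setIntegral_eq_integral_measureReal_inter hf hf0 hA]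
  refine setIntegral_congr_fun measurableSet_Ioi fun t _ => ?_
  rcases lt_or_ge t c with htc | hct
  · have hAt : A ⊆ {x | t < f x} := fun x hx => htc.trans_le (hAc hx)
    rw [inter_eq_right.2 hAt, min_eq_left (measureReal_mono hAt)]
  · have htA : {x | t < f x} ⊆ A := fun x hx => hcA (hct.trans_lt hx)
    rw [inter_eq_left.2 htA, min_eq_right (measureReal_mono htA)]

end LayerCake

section Dice

variable {n : ℕ} {m : (Fin n → ℝ) → ℝ}

lemma IsMarg.integrable (hm : IsMarg m) : Integrable m (cubeMeasure n) :=
  (integrable_const 1).mono' hm.1.aestronglyMeasurable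
    (Eventually.of_forall fun ω => abs_le.2 ⟨by linarith [(hm.2 ω).1], (hm.2 ω).2⟩)

lemma measureReal_lt_eq_FcdfMinus (t : ℝ) :
    (cubeMeasure n).real {ω | t < m ω} = FcdfMinus m (1 - t) := by
  simp only [FcdfMinus, measureReal_def, sub_lt_sub_iff_left]

lemma volume_lt_one_sub_Finv_inter_Ioo (hm : IsMarg m) {v : ℝ} (hv1 : v ≤ 1) (t : ℝ) :
    volume ({u | t < 1 - Finv m u} ∩ Ioo 0 v)
      = ENNReal.ofReal (min v ((cubeMeasure n).real {ω | t < m ω})) := by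
  rw [measureReal_lt_eq_FcdfMinus]
  set c := min v (FcdfMinus m (1 - t))
  have hsub : {u | t < 1 - Finv m u} ∩ Ioo 0 v ⊆ Ioc 0 c := by
    rintro u ⟨htu, hu0, huv⟩
    have hFinv : Finv m u < 1 - t := by linarith [show t < 1 - Finv m u from htu]
    exact ⟨hu0, le_min huv.le (le_FcdfMinus_of_Finv_lt hm (huv.le.trans hv1) hFinv)⟩
  have hsup : Ioo 0 c ⊆ {u | t < 1 - Finv m u} ∩ Ioo 0 v := by
    rintro u ⟨hu0, huc⟩
    have huv : u < v := huc.trans_le (min_le_left _ _)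
    have hFinv := Finv_lt_of_lt_FcdfMinus hm hu0 (huv.le.trans hv1)
      (huc.trans_le (min_le_right _ _))
    exact ⟨show t < 1 - Finv m u by linarith, hu0, huv⟩
  refine le_antisymm ?_ ?_
  · simpa using measure_mono (μ := volume) hsub
  · simpa using measure_mono (μ := volume) hsup

lemma intervalIntegrable_one_sub_Finv (hm : IsMarg m) {a b : ℝ} (hab : a ≤ b) (hb : b ≤ 1) :
    IntervalIntegrable (fun u => 1 - Finv m u) volume a b := by
  refine (intervalIntegrable_const (c := (1:ℝ))).sub (MonotoneOn.intervalIntegrable ?_)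
  exact (monotoneOn_Finv hm).mono (by rw [uIcc_of_le hab]; exact fun u hu => hu.2.trans hb)

lemma integral_one_sub_Finv_eq (hm : IsMarg m) {v : ℝ} (hv0 : 0 ≤ v) (hv1 : v ≤ 1) :
    ∫ u in (0:ℝ)..v, (1 - Finv m u)
      = ∫ t in Ioi 0, min v ((cubeMeasure n).real {ω | t < m ω}) := by
  have hint : IntegrableOn (fun u => 1 - Finv m u) (Ioo 0 v) :=
    ((intervalIntegrable_iff_integrableOn_Ioc_of_le hv0).1
      (intervalIntegrable_one_sub_Finv hm hv0 hv1)).mono_set Ioo_subset_Ioc_self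
  have hnn : 0 ≤ᵐ[volume.restrict (Ioo 0 v)] fun u => 1 - Finv m u :=
    (ae_restrict_iff' measurableSet_Ioo).2 (Eventually.of_forall fun u hu =>
      sub_nonneg.2 (Finv_le_one hm (hu.2.le.trans hv1)))
  rw [intervalIntegral.integral_of_le hv0, integral_Ioc_eq_integral_Ioo,
    hint.integral_eq_integral_meas_lt hnn]
  refine setIntegral_congr_fun measurableSet_Ioi fun t _ => ?_
  rw [measureReal_def, Measure.restrict_apply' measurableSet_Ioo,
    volume_lt_one_sub_Finv_inter_Ioo hm hv1,
    ENNReal.toReal_ofReal (le_min hv0 measureReal_nonneg)]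

lemma IsSeg.eq_indicator {s : (Fin n → ℝ) → ℝ} (hs : IsSeg s) :
    s = (s ⁻¹' {1}).indicator 1 := by
  funext ω
  rcases hs.2 ω with h | h <;> simp [h]

lemma isSeg_indicator {A : Set (Fin n → ℝ)} (hA : MeasurableSet A) : IsSeg (A.indicator 1) :=
  ⟨measurable_one.indicator hA, fun ω => by by_cases h : ω ∈ A <;> simp [h]⟩

lemma Dice_indicator {A : Set (Fin n → ℝ)} (hA : MeasurableSet A) :
    Dice m (A.indicator 1)
      = 2 * (∫ ω in A, m ω ∂cubeMeasure n) / ((cubeMeasure n).real A + vol m) := by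
  have : (fun ω => A.indicator 1 ω * m ω) = A.indicator m := by
    funext ω
    by_cases h : ω ∈ A <;> simp [h]
  rw [Dice, vol, integral_indicator_one hA, this, integral_indicator hA]

lemma Dice_indicator_le_dFun (hm : IsMarg m) {A : Set (Fin n → ℝ)} (hA : MeasurableSet A) :
    Dice m (A.indicator 1) ≤ dFun m ((cubeMeasure n).real A) := by
  have hvol : 0 ≤ vol m := integral_nonneg fun ω => (hm.2 ω).1
  rw [Dice_indicator hA, dFun, integral_one_sub_Finv_eq hm measureReal_nonneg measureReal_le_one,
    add_comm (vol m)]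
  gcongr
  exact setIntegral_le_integral_min hm.integrable (fun ω => (hm.2 ω).1) (fun ω => (hm.2 ω).2) hA

lemma dFun_eq_Dice_indicator_of_level (hm : IsMarg m) {A : Set (Fin n → ℝ)}
    (hA : MeasurableSet A) {c : ℝ} (hcA : {ω | c < m ω} ⊆ A) (hAc : A ⊆ {ω | c ≤ m ω}) :
    dFun m ((cubeMeasure n).real A) = Dice m (A.indicator 1) := by
  rw [Dice_indicator hA, dFun, integral_one_sub_Finv_eq hm measureReal_nonneg measureReal_le_one,
    add_comm (vol m),
    setIntegral_eq_integral_min_of_level hm.integrable (fun ω => (hm.2 ω).1) hA hcA hAc]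

end Dice

/-- `w ↦ (a + b w) / (c + w)` is monotone where `c + w > 0`, increasing or decreasing according
to the sign of `b c - a`. -/
lemma add_mul_div_add_le_max {a b c v v₁ v₂ : ℝ} (hc : 0 < c + v₁) (hv₁ : v₁ ≤ v) (hv₂ : v ≤ v₂) :
    (a + b * v) / (c + v) ≤ max ((a + b * v₁) / (c + v₁)) ((a + b * v₂) / (c + v₂)) := by
  rcases le_or_gt a (b * c) with habc | habc
  · refine le_max_of_le_right ?_
    rw [div_le_div_iff₀ (by linarith) (by linarith)]
    nlinarith [mul_nonneg (sub_nonneg.2 habc) (sub_nonneg.2 hv₂)]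
  · refine le_max_of_le_left ?_
    rw [div_le_div_iff₀ (by linarith) hc]
    nlinarith [mul_nonneg (sub_nonneg.2 habc.le) (sub_nonneg.2 hv₁)]

section Assembly

variable {n : ℕ} {m : (Fin n → ℝ) → ℝ}

lemma integral_one_sub_Finv_of_mem_Icc (hm : IsMarg m) {t₀ w : ℝ} (hw₁ : FcdfMinus m t₀ ≤ w)
    (hw₂ : w ≤ Fcdf m t₀) :
    ∫ u in (0:ℝ)..w, (1 - Finv m u)
      = (∫ u in (0:ℝ)..FcdfMinus m t₀, (1 - Finv m u)) + (1 - t₀) * (w - FcdfMinus m t₀) := by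
  have hv₁ : 0 ≤ FcdfMinus m t₀ := measureReal_nonneg
  have hw1 : w ≤ 1 := hw₂.trans (Fcdf_le_one t₀)
  have hconst : EqOn (fun u => 1 - Finv m u) (fun _ => 1 - t₀) (Ioc (FcdfMinus m t₀) w) := by
    intro u ⟨hu₁, huw⟩
    have hu0 : 0 < u := hv₁.trans_lt hu₁
    have hu1 : u ≤ 1 := huw.trans hw1
    have hle : Finv m u ≤ t₀ := (Finv_le_iff hm hu0 hu1).2 (huw.trans hw₂)
    have hge : t₀ ≤ Finv m u := not_lt.1 fun h => (le_FcdfMinus_of_Finv_lt hm hu1 h).not_gt hu₁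
    simp only [le_antisymm hle hge]
  rw [← intervalIntegral.integral_add_adjacent_intervals
      (intervalIntegrable_one_sub_Finv hm hv₁ (hw₁.trans hw1))
      (intervalIntegrable_one_sub_Finv hm hw₁ hw1),
    intervalIntegral.integral_of_le hw₁ (f := fun u => 1 - Finv m u),
    setIntegral_congr_fun measurableSet_Ioc hconst, setIntegral_const, Real.volume_real_Ioc_of_le hw₁,
    smul_eq_mul, mul_comm]

lemma dFun_le_max (hm : IsMarg m) (h0 : 0 < vol m) {t₀ v : ℝ} (hv₁ : FcdfMinus m t₀ ≤ v)
    (hv₂ : v ≤ Fcdf m t₀) :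
    dFun m v ≤ max (dFun m (FcdfMinus m t₀)) (dFun m (Fcdf m t₀)) := by
  set N₁ := ∫ u in (0:ℝ)..FcdfMinus m t₀, (1 - Finv m u) with hN₁
  have hlin : ∀ w, FcdfMinus m t₀ ≤ w → w ≤ Fcdf m t₀ → dFun m w
      = (2 * (N₁ - (1 - t₀) * FcdfMinus m t₀) + 2 * (1 - t₀) * w) / (vol m + w) := by
    intro w hw₁ hw₂
    rw [dFun, integral_one_sub_Finv_of_mem_Icc hm hw₁ hw₂, ← hN₁]
    ring
  rw [hlin v hv₁ hv₂, hlin _ le_rfl (hv₁.trans hv₂), hlin _ (hv₁.trans hv₂) le_rfl]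
  exact add_mul_div_add_le_max (add_pos_of_pos_of_nonneg h0 measureReal_nonneg) hv₁ hv₂

lemma exists_dFun_ge_Dice (hm : IsMarg m) {s : (Fin n → ℝ) → ℝ} (hs : IsSeg s) :
    ∃ v ∈ Icc (0:ℝ) 1, Dice m s ≤ dFun m v := by
  refine ⟨(cubeMeasure n).real (s ⁻¹' {1}), ⟨measureReal_nonneg, measureReal_le_one⟩, ?_⟩
  conv_lhs => rw [hs.eq_indicator]
  exact Dice_indicator_le_dFun hm (hs.1 (measurableSet_singleton 1))

lemma exists_Dice_ge_dFun (hm : IsMarg m) (h0 : 0 < vol m) {v : ℝ} (hv : v ∈ Icc (0:ℝ) 1) :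
    ∃ s, IsSeg s ∧ dFun m v ≤ Dice m s := by
  rcases hv.1.eq_or_lt with rfl | hv0
  · exact ⟨0, ⟨measurable_const, fun _ => Or.inl rfl⟩, by simp [dFun, Dice]⟩
  set t₀ := Finv m v
  have hX : Measurable fun ω => 1 - m ω := measurable_const.sub hm.1
  have hlt : dFun m (FcdfMinus m t₀) = Dice m ({ω | 1 - m ω < t₀}.indicator 1) :=
    dFun_eq_Dice_indicator_of_level hm (measurableSet_lt hX measurable_const) (c := 1 - t₀)
      (fun ω (h : 1 - t₀ < m ω) => show 1 - m ω < t₀ by linarith)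
      (fun ω (h : 1 - m ω < t₀) => show 1 - t₀ ≤ m ω by linarith)
  have hle : dFun m (Fcdf m t₀) = Dice m ({ω | 1 - m ω ≤ t₀}.indicator 1) :=
    dFun_eq_Dice_indicator_of_level hm (measurableSet_le hX measurable_const) (c := 1 - t₀)
      (fun ω (h : 1 - t₀ < m ω) => show 1 - m ω ≤ t₀ by linarith)
      (fun ω (h : 1 - m ω ≤ t₀) => show 1 - t₀ ≤ m ω by linarith)
  rcases le_max_iff.1 (dFun_le_max hm h0 (FcdfMinus_Finv_le hm hv0 hv.2) (le_Fcdf_Finv hm hv.2))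
    with h | h
  · exact ⟨_, isSeg_indicator (measurableSet_lt hX measurable_const), hlt ▸ h⟩
  · exact ⟨_, isSeg_indicator (measurableSet_le hX measurable_const), hle ▸ h⟩

end Assembly

theorem stmt8 {n : ℕ} {m : (Fin n → ℝ) → ℝ} (hm : IsMarg m) (h0 : 0 < vol m) :
    sSup {x : ℝ | ∃ s, IsSeg s ∧ x = Dice m s} =
      sSup {x : ℝ | ∃ v ∈ Set.Icc (0:ℝ) 1, x = dFun m v} := by
  refine csSup_eq_csSup_of_forall_exists_le ?_ ?_
  · rintro _ ⟨s, hs, rfl⟩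
    obtain ⟨v, hv, h⟩ := exists_dFun_ge_Dice hm hs
    exact ⟨_, ⟨v, hv, rfl⟩, h⟩
  · rintro _ ⟨v, hv, rfl⟩
    obtain ⟨s, hs, h⟩ := exists_Dice_ge_dFun hm h0 hv
    exact ⟨_, ⟨s, hs, rfl⟩, h⟩
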